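/- arXiv:2203.09666 — 10 statements merged into one kernel-verified Lean document; each statement's English description precedes it below -/
import Mathlib

section
/- If K is a C-close convex set, then K is a closed pseudo-cone, i.e., K is a nonempty closed convex set not containing the origin such that λx ∈ K whenever x ∈ K and λ ≥ 1. -/
open Set MeasureTheory
open scoped Classical
open scoped RealInnerProductSpace

noncomputable section

abbrev Euc (n : ℕ) := EuclideanSpace ℝ (Fin n)

/-- A (convex) pseudo-cone: nonempty convex set not containing the origin,
closed under multiplication by scalars `≥ 1`. -/
def IsPseudoCone {n : ℕ} (K : Set (Euc n)) : Prop :=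
  K.Nonempty ∧ Convex ℝ K ∧ (0 : Euc n) ∉ K ∧
    ∀ x ∈ K, ∀ l : ℝ, 1 ≤ l → l • x ∈ K

/-- A closed pseudo-cone. -/
def IsClosedPseudoCone {n : ℕ} (K : Set (Euc n)) : Prop :=
  IsClosed K ∧ IsPseudoCone K

/-- The duality `K* = {x : ⟪x,y⟫ ≤ -1 for all y ∈ K}`. -/
def pcDual {n : ℕ} (K : Set (Euc n)) : Set (Euc n) :=
  {x | ∀ y ∈ K, ⟪x, y⟫ ≤ (-1 : ℝ)}

/-- The recession cone `rec K = {x : K + x ⊆ K}`. -/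
def recCone {n : ℕ} (K : Set (Euc n)) : Set (Euc n) :=
  {x | ∀ y ∈ K, y + x ∈ K}

/-- `ℝ₊ K = {λ • x : λ ≥ 0, x ∈ K}`. -/
def posHull {n : ℕ} (K : Set (Euc n)) : Set (Euc n) :=
  {x | ∃ l : ℝ, 0 ≤ l ∧ ∃ y ∈ K, x = l • y}

/-- The polar cone `C° = {x : ⟪x,y⟫ ≤ 0 for all y ∈ C}`. -/
def polarCone {n : ℕ} (C : Set (Euc n)) : Set (Euc n) :=
  {x | ∀ y ∈ C, ⟪x, y⟫ ≤ (0 : ℝ)}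

/-- Membership in the class `PC^n`: closed pseudo-cones together with `∅` and `ℝⁿ`. -/
def MemPC {n : ℕ} (K : Set (Euc n)) : Prop :=
  IsClosedPseudoCone K ∨ K = ∅ ∨ K = Set.univ

/-- The join in `PC^n`. -/
def pcJoin {n : ℕ} (K L : Set (Euc n)) : Set (Euc n) :=
  if (0 : Euc n) ∈ closure (convexHull ℝ (K ∪ L)) then Set.univ
  else closure (convexHull ℝ (K ∪ L))

/-!
Every `u ∈ C` is a recession direction of `K`. Otherwise separate `y + u ∉ K` from `K` by a
functional `f < c` on `K`; then `f u > 0`, and since `C` is the closure of its interior there is a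
ball in `int C` on which `f > c`. Its translates by `k • u`, `k ∈ ℕ`, stay in `C` and on the side
`f > c`, so infinitely many disjoint congruent balls lie in `C \ K`, contradicting finite volume.
Given `C ⊆ rec K`: `0 ∈ K` would force `C ⊆ K`, i.e. `vol (C \ K) = 0`, and
`l • x = x + (l - 1) • x` gives the pseudo-cone property.
-/

open Metric Function

section

variable {E : Type*} [NormedAddCommGroup E] [NormedSpace ℝ E]

theorem add_mem_of_convex_of_smul_mem {C : Set E} (hconv : Convex ℝ C)
    (hcone : ∀ x ∈ C, ∀ l : ℝ, 0 ≤ l → l • x ∈ C) {a b : E} (ha : a ∈ C) (hb : b ∈ C) :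
    a + b ∈ C := by
  have hmid : (2 : ℝ)⁻¹ • a + (2 : ℝ)⁻¹ • b ∈ C :=
    hconv ha hb (by norm_num) (by norm_num) (by norm_num)
  simpa [smul_add, smul_smul] using hcone _ hmid 2 zero_le_two

theorem Convex.interior_inter_nonempty_of_mem {C U : Set E} (hconv : Convex ℝ C)
    (hint : (interior C).Nonempty) (hU : IsOpen U) {p : E} (hpC : p ∈ C) (hpU : p ∈ U) :
    (interior C ∩ U).Nonempty := by
  have hp : p ∈ closure (interior C) := by
    rw [hconv.closure_interior_eq_closure_of_nonempty_interior hint]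
    exact subset_closure hpC
  obtain ⟨q, hqU, hqC⟩ := mem_closure_iff.1 hp U hU hpU
  exact ⟨q, hqC, hqU⟩

theorem pairwise_disjoint_ball_add_nsmul {u : E} {r : ℝ} (hru : 2 * r ≤ ‖u‖) (w : E) :
    Pairwise (Disjoint on fun k : ℕ => ball (w + k • u) r) := by
  intro i j hij
  apply ball_disjoint_ball
  have hij' : (1 : ℝ) ≤ |(i : ℝ) - j| := by
    have : (1 : ℤ) ≤ |(i : ℤ) - j| := Int.one_le_abs (sub_ne_zero.2 (by exact_mod_cast hij))
    exact_mod_cast this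
  calc r + r ≤ 1 * ‖u‖ := by linarith
    _ ≤ |(i : ℝ) - j| * ‖u‖ := by gcongr
    _ = dist (w + i • u) (w + j • u) := by
      rw [dist_add_left, dist_eq_norm, ← Nat.cast_smul_eq_nsmul ℝ, ← Nat.cast_smul_eq_nsmul ℝ,
        ← sub_smul, norm_smul, Real.norm_eq_abs]

variable [MeasurableSpace E] [BorelSpace E] (μ : Measure E) [μ.IsAddHaarMeasure]

theorem measure_iUnion_ball_add_nsmul_eq_top {u : E} {r : ℝ} (hr : 0 < r) (hru : 2 * r ≤ ‖u‖)
    (w : E) : μ (⋃ k : ℕ, ball (w + k • u) r) = ⊤ := by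
  rw [measure_iUnion (pairwise_disjoint_ball_add_nsmul hru w) fun _ => measurableSet_ball]
  simp_rw [Measure.addHaar_ball_center μ _ r]
  exact ENNReal.tsum_const_eq_top_of_ne_zero (measure_ball_pos μ 0 hr).ne'

theorem add_mem_of_measure_diff_ne_top {C K : Set E} (hCconv : Convex ℝ C)
    (hCcone : ∀ x ∈ C, ∀ l : ℝ, 0 ≤ l → l • x ∈ C) (hCint : (interior C).Nonempty)
    (hKC : K ⊆ C) (hKcl : IsClosed K) (hKconv : Convex ℝ K) (hfin : μ (C \ K) ≠ ⊤)
    {u y : E} (hu : u ∈ C) (hy : y ∈ K) : y + u ∈ K := by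
  by_contra hyu
  obtain ⟨f, c, hfK, hfyu⟩ := geometric_hahn_banach_closed_point hKconv hKcl hyu
  have hfu : 0 < f u := by linarith [hfK y hy, map_add f y u]
  have hU : IsOpen {x | c < f x} := isOpen_lt continuous_const f.continuous
  obtain ⟨w, hwC, hwU⟩ := hCconv.interior_inter_nonempty_of_mem hCint hU
    (add_mem_of_convex_of_smul_mem hCconv hCcone (hKC hy) hu) hfyu
  obtain ⟨r, hr, hball⟩ := Metric.isOpen_iff.1 (isOpen_interior.inter hU) w ⟨hwC, hwU⟩
  set ρ := min r (‖u‖ / 2)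
  have hu0 : u ≠ 0 := by rintro rfl; simp at hfu
  have hρ : 0 < ρ := lt_min hr (half_pos (norm_pos_iff.2 hu0))
  have htrans : ∀ k : ℕ, ball (w + k • u) ρ ⊆ C \ K := by
    intro k x hx
    have hx' : x - k • u ∈ interior C ∩ {x | c < f x} := by
      refine hball (ball_subset_ball (min_le_left r (‖u‖ / 2)) ?_)
      rwa [mem_ball, ← dist_add_right _ _ (k • u), sub_add_cancel]
    have hku : k • u ∈ C := by simpa [← Nat.cast_smul_eq_nsmul ℝ] using hCcone u hu k k.cast_nonneg
    have hxC := add_mem_of_convex_of_smul_mem hCconv hCcone (interior_subset hx'.1) hku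
    rw [sub_add_cancel] at hxC
    refine ⟨hxC, fun hxK => ?_⟩
    have hfx : f x = f (x - k • u) + k * f u := by simp
    have hfx' : c < f (x - k • u) := hx'.2
    nlinarith [hfK x hxK, k.cast_nonneg (α := ℝ)]
  refine hfin (top_le_iff.1 ?_)
  calc ⊤ = μ (⋃ k : ℕ, ball (w + k • u) ρ) :=
        (measure_iUnion_ball_add_nsmul_eq_top μ hρ (by linarith [min_le_right r (‖u‖ / 2)]) w).symm
    _ ≤ μ (C \ K) := measure_mono (iUnion_subset htrans)

end

theorem closedPseudoCone_of_C_close_general {n : ℕ} (C K : Set (Euc n))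
    (hCconv : Convex ℝ C)
    (hCcone : ∀ x ∈ C, ∀ l : ℝ, 0 ≤ l → l • x ∈ C)
    (hCint : (interior C).Nonempty)
    (hKC : K ⊆ C) (hKne : K.Nonempty) (hKcl : IsClosed K) (hKconv : Convex ℝ K)
    (hpos : 0 < volume (C \ K)) (hfin : volume (C \ K) < ⊤) :
    IsClosedPseudoCone K := by
  have hrec : ∀ u ∈ C, ∀ y ∈ K, y + u ∈ K := fun u hu y hy =>
    add_mem_of_measure_diff_ne_top volume hCconv hCcone hCint hKC hKcl hKconv hfin.ne hu hy
  have h0 : (0 : Euc n) ∉ K := by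
    intro h0K
    have hCK : C ⊆ K := fun x hx => by simpa using hrec x hx 0 h0K
    simp [sdiff_eq_empty.2 hCK] at hpos
  refine ⟨hKcl, hKne, hKconv, h0, fun x hx l hl => ?_⟩
  have hx' := hrec _ (hCcone x (hKC hx) (l - 1) (by linarith)) x hx
  rwa [sub_smul, one_smul, add_sub_cancel] at hx'

theorem closedPseudoCone_of_C_close {n : ℕ} (C K : Set (Euc n))
    (hCclosed : IsClosed C) (hCconv : Convex ℝ C)
    (hCcone : ∀ x ∈ C, ∀ l : ℝ, 0 ≤ l → l • x ∈ C)
    (hCpointed : ∀ x ∈ C, -x ∈ C → x = 0)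
    (hCint : (interior C).Nonempty)
    (hKC : K ⊆ C) (hKne : K.Nonempty) (hKcl : IsClosed K) (hKconv : Convex ℝ K)
    (hpos : 0 < volume (C \ K)) (hfin : volume (C \ K) < ⊤) :
    IsClosedPseudoCone K :=
  closedPseudoCone_of_C_close_general C K hCconv hCcone hCint hKC hKne hKcl hKconv hpos hfin
end
end

section
/- If K ⊆ ℝⁿ is a closed pseudo-cone, then the closure of ℝ₊K (the set of all nonnegative scalar multiples of points of K) equals the recession cone of K, rec K = {x ∈ ℝⁿ : K + x ⊆ K}. -/
open Set MeasureTheory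
open scoped Classical
open scoped RealInnerProductSpace

noncomputable section

theorem closure_posHull_eq_recCone {n : ℕ} (K : Set (Euc n))
    (hK : IsClosedPseudoCone K) :
    closure (posHull K) = recCone K := by
  obtain ⟨hcl, hne, hconv, h0, hsc⟩ := hK
  have hKK : ∀ a ∈ K, ∀ b ∈ K, a + b ∈ K := by
    intro a ha b hb
    have hm : (1/2 : ℝ) • a + (1/2 : ℝ) • b ∈ K :=
      hconv ha hb (by norm_num) (by norm_num) (by norm_num)
    have h2 := hsc _ hm 2 (by norm_num)
    have : (2:ℝ) • ((1/2 : ℝ) • a + (1/2 : ℝ) • b) = a + b := by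
      rw [smul_add, smul_smul, smul_smul]; norm_num
    rwa [this] at h2
  have hsub : posHull K ⊆ recCone K := by
    rintro x ⟨l, hl, z, hz, rfl⟩ y hy
    rcases le_or_gt 1 l with h1 | h1
    · exact hKK y hy _ (hsc z hz l h1)
    · have heq : y + l • z = (1 - l) • y + l • (y + z) := by
        rw [smul_add]; module
      rw [heq]
      exact hconv hy (hKK y hy z hz) (by linarith) hl (by ring)
  have hrecClosed : IsClosed (recCone K) := by
    have : recCone K = ⋂ y ∈ K, (fun x => y + x) ⁻¹' K := by
      ext x; simp [recCone]
    rw [this]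
    exact isClosed_biInter fun y hy => hcl.preimage (continuous_const.add continuous_id)
  refine Subset.antisymm (closure_minimal hsub hrecClosed) ?_
  intro x hx
  obtain ⟨y0, hy0⟩ := hne
  have hmem : ∀ m : ℕ, y0 + (m : ℝ) • x ∈ K := by
    intro m
    induction m with
    | zero => simpa using hy0
    | succ m ih =>
      have h := hx _ ih
      have : y0 + ((m:ℕ)+1 : ℝ) • x = y0 + (m:ℝ) • x + x := by module
      push_cast
      rw [this]; exact h
  have hseq : ∀ m : ℕ, 0 < m → ((m : ℝ)⁻¹) • y0 + x ∈ posHull K := by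
    intro m hm
    refine ⟨(m:ℝ)⁻¹, by positivity, y0 + (m:ℝ) • x, hmem m, ?_⟩
    rw [smul_add, smul_smul, inv_mul_cancel₀ (by positivity), one_smul]
  have htend : Filter.Tendsto (fun m : ℕ => ((m:ℝ)⁻¹) • y0 + x) Filter.atTop (nhds x) := by
    have h1 : Filter.Tendsto (fun m : ℕ => ((m:ℝ)⁻¹)) Filter.atTop (nhds 0) :=
      tendsto_inv_atTop_nhds_zero_nat
    have := (h1.smul_const y0).add_const x
    simpa using this
  exact mem_closure_of_tendsto htend
    (Filter.eventually_atTop.2 ⟨1, fun m hm => hseq m hm⟩)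
end
end

section
/- Let K, L ⊆ ℝⁿ be pseudo-cones. If the origin is not in the closure of the convex hull of K ∪ L, then the closure of the convex hull of K ∪ L is a closed pseudo-cone. -/
open Set MeasureTheory
open scoped Classical
open scoped RealInnerProductSpace

noncomputable section

open scoped Pointwise in
theorem closedPseudoCone_closure_convexHull_union {n : ℕ} (K L : Set (Euc n))
    (hK : IsPseudoCone K) (hL : IsPseudoCone L)
    (h0 : (0 : Euc n) ∉ closure (convexHull ℝ (K ∪ L))) :
    IsClosedPseudoCone (closure (convexHull ℝ (K ∪ L))) := by
  refine ⟨isClosed_closure, ?_, ?_, h0, ?_⟩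
  · obtain ⟨x, hx⟩ := hK.1
    exact ⟨x, subset_closure (subset_convexHull ℝ _ (Or.inl hx))⟩
  · exact (convex_convexHull ℝ _).closure
  · intro x hx l hl
    have hsub : l • (K ∪ L) ⊆ K ∪ L := by
      rintro y ⟨z, hz, rfl⟩
      rcases hz with hz | hz
      · exact Or.inl (hK.2.2.2 z hz l hl)
      · exact Or.inr (hL.2.2.2 z hz l hl)
    have h1 : l • convexHull ℝ (K ∪ L) ⊆ convexHull ℝ (K ∪ L) := by
      rw [← convexHull_smul]
      exact convexHull_mono hsub
    have h2 : l • x ∈ closure (l • convexHull ℝ (K ∪ L)) := by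
      have h := image_closure_subset_closure_image
        (continuous_const_smul l : Continuous fun y : Euc n => l • y)
        (s := convexHull ℝ (K ∪ L)) ⟨x, hx, rfl⟩
      simpa [Set.image_smul] using h
    exact closure_mono h1 h2
end
end

section
/- If K ⊆ ℝⁿ is a nonempty closed convex set not containing the origin, then K* = {x ∈ ℝⁿ : ⟨x, y⟩ ≤ −1 for all y ∈ K} is a closed pseudo-cone (in particular K* is nonempty). -/
open Set MeasureTheory
open scoped Classical
open scoped RealInnerProductSpace

noncomputable section

theorem pcDual_isClosedPseudoCone {n : ℕ} (K : Set (Euc n))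
    (hne : K.Nonempty) (hcl : IsClosed K) (hconv : Convex ℝ K)
    (h0 : (0 : Euc n) ∉ K) :
    IsClosedPseudoCone (pcDual K) := by
  constructor
  · -- closed: intersection of closed half-spaces
    have : pcDual K = ⋂ y ∈ K, {x : Euc n | ⟪x, y⟫ ≤ (-1 : ℝ)} := by
      ext x; simp [pcDual]
    rw [this]
    exact isClosed_biInter fun y _ =>
      isClosed_le (Continuous.inner continuous_id continuous_const) continuous_const
  refine ⟨?_, ?_, ?_, ?_⟩
  · -- nonempty via separation
    obtain ⟨f, u, hf0, hfy⟩ := geometric_hahn_banach_point_closed hconv hcl h0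
    have hu : (0 : ℝ) < u := by simpa using hf0
    set w := (InnerProductSpace.toDual ℝ (Euc n)).symm f with hw
    have hwf : ∀ y, ⟪w, y⟫ = f y := fun y =>
      InnerProductSpace.toDual_symm_apply
    refine ⟨-(u⁻¹) • w, fun y hy => ?_⟩
    have hfy' := hfy y hy
    have : ⟪-(u⁻¹) • w, y⟫ = -(u⁻¹) * f y := by
      rw [real_inner_smul_left, hwf]
    rw [this]
    rw [neg_mul, neg_le, neg_neg]
    rw [le_inv_mul_iff₀ hu] -- 1* u ≤ ...? check direction
    linarith
  · -- convex
    intro x₁ h₁ x₂ h₂ a b ha hb hab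
    intro y hy
    have := h₁ y hy
    have := h₂ y hy
    rw [inner_add_left, real_inner_smul_left, real_inner_smul_left]
    nlinarith
  · -- 0 ∉
    intro h
    obtain ⟨y, hy⟩ := hne
    have := h y hy
    simp at this
    linarith
  · intro x hx l hl y hy
    have hxy := hx y hy
    have : ⟪l • x, y⟫ = l * ⟪x, y⟫ := real_inner_smul_left x y l
    rw [this]
    nlinarith
end
end

section
/- If K ⊆ ℝⁿ is a closed pseudo-cone, then the closure of ℝ₊(K*) equals the polar cone of the closure of ℝ₊K, i.e., cl(ℝ₊(K*)) = (cl(ℝ₊K))° where C° = {x : ⟨x,y⟩ ≤ 0 for all y ∈ C}. -/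
open Set MeasureTheory
open scoped Classical
open scoped RealInnerProductSpace

noncomputable section

/-!
`K*` lies in the polar cone `K°`, which is closed, so `cl(ℝ₊ K*) ⊆ K°`; and `K°` does not change
when `K` is replaced by `cl(ℝ₊ K)`. Conversely, separating `0` from `K` gives some `v ∈ K*`.
For `x ∈ K°` and `t > 0` the point `t⁻¹ x + v` is again in `K*`, so `x + t v ∈ ℝ₊ K*`,
and letting `t → 0⁺` puts `x` in the closure.
-/

section Polar

variable {n : ℕ}

theorem polarCone_eq_iInter (S : Set (Euc n)) :
    polarCone S = ⋂ y ∈ S, {x : Euc n | ⟪x, y⟫ ≤ 0} := by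
  ext x
  simp [polarCone]

theorem isClosed_polarCone (S : Set (Euc n)) : IsClosed (polarCone S) := by
  rw [polarCone_eq_iInter]
  exact isClosed_biInter fun y _ =>
    isClosed_le (continuous_id.inner continuous_const) continuous_const

theorem smul_mem_polarCone {S : Set (Euc n)} {x : Euc n} (hx : x ∈ polarCone S)
    {c : ℝ} (hc : 0 ≤ c) : c • x ∈ polarCone S := fun y hy => by
  rw [real_inner_smul_left]
  exact mul_nonpos_of_nonneg_of_nonpos hc (hx y hy)

theorem subset_posHull (S : Set (Euc n)) : S ⊆ posHull S :=
  fun y hy => ⟨1, zero_le_one, y, hy, (one_smul ℝ y).symm⟩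

theorem smul_mem_posHull {S : Set (Euc n)} {y : Euc n} (hy : y ∈ S) {c : ℝ} (hc : 0 ≤ c) :
    c • y ∈ posHull S :=
  ⟨c, hc, y, hy, rfl⟩

theorem polarCone_antitone {S T : Set (Euc n)} (h : S ⊆ T) : polarCone T ⊆ polarCone S :=
  fun _ hx y hy => hx y (h hy)

theorem polarCone_closure_posHull (S : Set (Euc n)) :
    polarCone (closure (posHull S)) = polarCone S := by
  refine (polarCone_antitone ((subset_posHull S).trans subset_closure)).antisymm fun x hx => ?_
  have hposHull : posHull S ⊆ {y | ⟪x, y⟫ ≤ 0} := by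
    rintro _ ⟨c, hc, y, hy, rfl⟩
    rw [mem_ofPred_eq, real_inner_smul_right]
    exact mul_nonpos_of_nonneg_of_nonpos hc (hx y hy)
  exact fun y hy => closure_minimal hposHull
    (isClosed_le (continuous_const.inner continuous_id) continuous_const) hy

theorem pcDual_subset_polarCone (S : Set (Euc n)) : pcDual S ⊆ polarCone S :=
  fun x hx y hy => (hx y hy).trans (by norm_num)

theorem posHull_pcDual_subset_polarCone (S : Set (Euc n)) :
    posHull (pcDual S) ⊆ polarCone S := by
  rintro _ ⟨c, hc, x, hx, rfl⟩
  exact smul_mem_polarCone (pcDual_subset_polarCone S hx) hc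

theorem add_mem_pcDual {S : Set (Euc n)} {x v : Euc n} (hx : x ∈ polarCone S)
    (hv : v ∈ pcDual S) : x + v ∈ pcDual S := fun y hy => by
  rw [inner_add_left]
  linarith [hx y hy, hv y hy]

theorem pcDual_nonempty {K : Set (Euc n)} (hclosed : IsClosed K) (hconv : Convex ℝ K)
    (h0 : (0 : Euc n) ∉ K) : (pcDual K).Nonempty := by
  obtain ⟨f, u, hf0, hfK⟩ := geometric_hahn_banach_point_closed hconv hclosed h0
  have hu : 0 < u := by simpa using hf0
  -- `w` represents `f`; scaling by `-u⁻¹` turns `u < f y` into `⟪-u⁻¹ • w, y⟫ < -1`.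
  set w := (InnerProductSpace.toDual ℝ (Euc n)).symm f
  refine ⟨(-u⁻¹) • w, fun y hy => ?_⟩
  have hwy : ⟪w, y⟫ = f y := InnerProductSpace.toDual_symm_apply
  rw [real_inner_smul_left, hwy, neg_mul, neg_le_neg_iff, inv_mul_eq_div, one_le_div hu]
  exact (hfK y hy).le

theorem polarCone_subset_closure_posHull_pcDual {S : Set (Euc n)} (hS : (pcDual S).Nonempty) :
    polarCone S ⊆ closure (posHull (pcDual S)) := by
  obtain ⟨v, hv⟩ := hS
  intro x hx
  have hlim : Filter.Tendsto (fun t : ℝ => x + t • v) (nhdsWithin 0 (Ioi 0)) (nhds x) := by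
    refine (Continuous.tendsto' ?_ 0 x (by simp)).mono_left nhdsWithin_le_nhds
    fun_prop
  refine mem_closure_of_tendsto hlim ?_
  filter_upwards [self_mem_nhdsWithin] with t (ht : 0 < t)
  have hxt : x + t • v = t • (t⁻¹ • x + v) := by
    rw [smul_add, smul_inv_smul₀ ht.ne']
  rw [hxt]
  exact smul_mem_posHull (add_mem_pcDual (smul_mem_polarCone hx (inv_nonneg.2 ht.le)) hv) ht.le

end Polar

theorem closure_posHull_pcDual_eq_polarCone {n : ℕ} (K : Set (Euc n))
    (hK : IsClosedPseudoCone K) :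
    closure (posHull (pcDual K)) = polarCone (closure (posHull K)) := by
  obtain ⟨hclosed, -, hconv, h0, -⟩ := hK
  rw [polarCone_closure_posHull]
  exact (closure_minimal (posHull_pcDual_subset_polarCone K) (isClosed_polarCone K)).antisymm
    (polarCone_subset_closure_posHull_pcDual (pcDual_nonempty hclosed hconv h0))
end
end

section
/- If K ⊆ ℝⁿ is a closed pseudo-cone, then K** = K, where K* = {x : ⟨x,y⟩ ≤ −1 for all y ∈ K}. -/
open Set MeasureTheory
open scoped Classical
open scoped RealInnerProductSpace

noncomputable section

/-- Riesz-representation helper: separate a point from a closed convex set by a vector. -/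
lemma sep_point_closed {n : ℕ} {K : Set (Euc n)} (hKc : IsClosed K)
    (hKconv : Convex ℝ K) {z : Euc n} (hz : z ∉ K) :
    ∃ (v : Euc n) (u : ℝ), ⟪v, z⟫ < u ∧ ∀ y ∈ K, u < ⟪v, y⟫ := by
  obtain ⟨f, u, hfz, hfK⟩ := geometric_hahn_banach_point_closed hKconv hKc hz
  refine ⟨(InnerProductSpace.toDual ℝ (Euc n)).symm f, u, ?_, fun y hy => ?_⟩
  · rwa [InnerProductSpace.toDual_symm_apply]
  · rw [InnerProductSpace.toDual_symm_apply]; exact hfK y hy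

theorem pcDual_pcDual_eq_self {n : ℕ} (K : Set (Euc n))
    (hK : IsClosedPseudoCone K) :
    pcDual (pcDual K) = K := by
  obtain ⟨hKc, hKne, hKconv, hK0, hKscale⟩ := hK
  -- Separation of 0 gives an element of pcDual K
  obtain ⟨v₀, u₀, h0, hK0'⟩ := sep_point_closed hKc hKconv hK0
  rw [inner_zero_right] at h0
  have hu₀ : 0 < u₀ := h0
  have hw : ∀ y ∈ K, ⟪(-(u₀⁻¹ : ℝ)) • v₀, y⟫ ≤ (-1 : ℝ) := by
    intro y hy
    rw [real_inner_smul_left]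
    have := hK0' y hy
    have h1 : (1 : ℝ) < u₀⁻¹ * ⟪v₀, y⟫ := by
      rw [← div_eq_inv_mul, lt_div_iff₀ hu₀, one_mul]; exact this
    nlinarith
  obtain ⟨w, hw⟩ : ∃ w : Euc n, ∀ y ∈ K, ⟪w, y⟫ ≤ (-1 : ℝ) := ⟨_, hw⟩
  ext z
  constructor
  · intro hz
    by_contra hzK
    obtain ⟨v, u, hvz, hvK⟩ := sep_point_closed hKc hKconv hzK
    -- nonnegativity of ⟪v, y⟫ on K from scaling
    have hvnn : ∀ y ∈ K, (0 : ℝ) ≤ ⟪v, y⟫ := by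
      intro y hy
      by_contra hneg
      push_neg at hneg
      set c := ⟪v, y⟫
      set l : ℝ := max 1 (u / c)
      have hl1 : (1 : ℝ) ≤ l := le_max_left _ _
      have hly := hvK (l • y) (hKscale y hy l hl1)
      rw [inner_smul_right] at hly
      have : l * c ≤ u := by
        have hlc : u / c ≤ l := le_max_right _ _
        calc l * c ≤ (u / c) * c := by nlinarith
        _ = u := div_mul_cancel₀ u (ne_of_lt hneg)
      linarith
    rcases le_or_gt u 0 with hu | hu
    · -- u ≤ 0 case: use w - s • v
      have hvz' : ⟪v, z⟫ < 0 := lt_of_lt_of_le hvz hu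
      set s : ℝ := max 0 ((-1 - ⟪w, z⟫) / (-⟪v, z⟫) + 1)
      have hs0 : (0 : ℝ) ≤ s := le_max_left _ _
      have hx : w - s • v ∈ pcDual K := by
        intro y hy
        rw [inner_sub_left, real_inner_smul_left]
        have h1 := hw y hy
        have h2 := hvnn y hy
        nlinarith
      have hc := hz _ hx
      rw [real_inner_comm, inner_sub_left, real_inner_smul_left] at hc
      have hs : (-1 - ⟪w, z⟫) / (-⟪v, z⟫) + 1 ≤ s := le_max_right _ _
      have hpos : (0 : ℝ) < -⟪v, z⟫ := by linarith
      have : (-1 - ⟪w, z⟫) / (-⟪v, z⟫) < s := by linarith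
      rw [div_lt_iff₀ hpos] at this
      
      nlinarith
    · -- u > 0 case: use -(u⁻¹) • v
      have hx : (-(u⁻¹ : ℝ)) • v ∈ pcDual K := by
        intro y hy
        rw [real_inner_smul_left]
        have := hvK y hy
        have h1 : (1 : ℝ) < u⁻¹ * ⟪v, y⟫ := by
          rw [← div_eq_inv_mul, lt_div_iff₀ hu, one_mul]; exact this
        nlinarith
      have hc := hz _ hx
      rw [real_inner_comm, real_inner_smul_left] at hc
      
      have : u⁻¹ * ⟪v, z⟫ ≥ 1 := by nlinarith
      rw [ge_iff_le, ← div_eq_inv_mul, le_div_iff₀ hu, one_mul] at this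
      linarith
  · intro hzK x hx
    rw [real_inner_comm]
    exact hx z hzK
end
end

section
/- Let K ⊆ ℝⁿ be a closed pseudo-cone and u ∈ ℝⁿ with h_{K*}(u) < 0. Then u ∈ (ℝ₊K) \ {o} and the radial function of K satisfies ρ_K(u) = 1 / h_{K*}(u). -/
open Set MeasureTheory
open scoped Classical
open scoped RealInnerProductSpace

noncomputable section

/-- Separation lemma: if `v ∉ K` and the dual is nonempty, there is a dual vector
with `⟪x, v⟫ > -1`. -/
lemma exists_dual_gt {n : ℕ} {K : Set (Euc n)} (hK : IsClosedPseudoCone K)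
    {x₀ : Euc n} (hx₀ : x₀ ∈ pcDual K) {v : Euc n} (hv : v ∉ K) :
    ∃ x ∈ pcDual K, -1 < ⟪x, v⟫ := by
  obtain ⟨hcl, _, hconv, _, hsc⟩ := hK
  obtain ⟨f, α, hfa, hfv⟩ := geometric_hahn_banach_closed_point hconv hcl hv
  set w := (InnerProductSpace.toDual ℝ (Euc n)).symm f with hw
  have hfw : ∀ z, ⟪w, z⟫ = f z := fun z => InnerProductSpace.toDual_symm_apply
  have hwK : ∀ y ∈ K, ⟪w, y⟫ < α := by
    intro y hy; rw [hfw]; exact hfa y hy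
  have hle0 : ∀ y ∈ K, ⟪w, y⟫ ≤ 0 := by
    intro y hy
    by_contra hpos
    push_neg at hpos
    set c := ⟪w, y⟫ with hc
    set l := max 1 ((α + 1) / c) with hl
    have hl1 : (1 : ℝ) ≤ l := le_max_left _ _
    have hmem : l • y ∈ K := hsc y hy l hl1
    have h1 : ⟪w, l • y⟫ < α := hwK _ hmem
    rw [real_inner_smul_right] at h1
    have h2 : (α + 1) / c ≤ l := le_max_right _ _
    have h3 : (α + 1) ≤ l * c := by
      have := (div_le_iff₀ hpos).mp h2
      linarith
    linarith
  have hwv : α < ⟪w, v⟫ := by rw [hfw]; exact hfv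
  rcases lt_or_ge α 0 with hα | hα
  · -- α < 0 : scale w
    refine ⟨(-α)⁻¹ • w, ?_, ?_⟩
    · intro y hy
      rw [real_inner_smul_left]
      have hc := hwK y hy
      have ha : (0:ℝ) < -α := by linarith
      have hainv : (0:ℝ) < (-α)⁻¹ := inv_pos.mpr ha
      have : (-α)⁻¹ * (-α) = 1 := inv_mul_cancel₀ (ne_of_gt ha)
      nlinarith
    · rw [real_inner_smul_left]
      have ha : (0:ℝ) < -α := by linarith
      have hainv : (0:ℝ) < (-α)⁻¹ := inv_pos.mpr ha
      have : (-α)⁻¹ * (-α) = 1 := inv_mul_cancel₀ (ne_of_gt ha)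
      nlinarith
  · -- α ≥ 0 : translate x₀
    have hc : (0:ℝ) < ⟪w, v⟫ := lt_of_le_of_lt hα hwv
    set c := ⟪w, v⟫ with hcdef
    set e := (-1 - ⟪x₀, v⟫) / c + 1 with he
    set t := max 0 e with ht
    refine ⟨x₀ + t • w, ?_, ?_⟩
    · intro y hy
      rw [inner_add_left, real_inner_smul_left]
      have h1 : ⟪x₀, y⟫ ≤ -1 := hx₀ y hy
      have h2 : ⟪w, y⟫ ≤ 0 := hle0 y hy
      have h3 : 0 ≤ t := le_max_left _ _
      nlinarith [mul_nonpos_of_nonneg_of_nonpos h3 h2]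
    · rw [inner_add_left, real_inner_smul_left]
      have h3 : e ≤ t := le_max_right _ _
      have h4 : e * c ≤ t * c := mul_le_mul_of_nonneg_right h3 (le_of_lt hc)
      have h5 : e * c = (-1 - ⟪x₀, v⟫) + c := by
        rw [he]; field_simp
      nlinarith

/-- If `h_{K*}(u) < 0`, then `u ∈ ℝ₊K \ {0}` and `ρ_K(u) = 1 / h_{K*}(u)`. -/
theorem radialFunction_eq_inv_support {n : ℕ} (K : Set (Euc n)) (u : Euc n)
    (hK : IsClosedPseudoCone K)
    (hsupp : sSup ((fun x => ⟪u, x⟫) '' pcDual K) < 0) :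
    u ∈ posHull K \ {0} ∧
      (-(sInf {l : ℝ | 0 ≤ l ∧ l • u ∈ K}))
        = 1 / sSup ((fun x => ⟪u, x⟫) '' pcDual K) := by
  set img := (fun x => ⟪u, x⟫) '' pcDual K with himg
  set h := sSup img with hh
  have hDne : (pcDual K).Nonempty := by
    by_contra hemp
    rw [Set.not_nonempty_iff_eq_empty] at hemp
    rw [hh, himg, hemp, Set.image_empty, Real.sSup_empty] at hsupp
    exact lt_irrefl 0 hsupp
  obtain ⟨x₀, hx₀⟩ := hDne
  have hbdd : BddAbove img := by
    by_contra hb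
    rw [hh, Real.sSup_of_not_bddAbove hb] at hsupp
    exact lt_irrefl 0 hsupp
  have hle : ∀ x ∈ pcDual K, ⟪u, x⟫ ≤ h := fun x hx =>
    le_csSup hbdd ⟨x, hx, rfl⟩
  have hneg : h < 0 := hsupp
  have hpos : (0:ℝ) < -h := by linarith
  have hainv : (0:ℝ) < (-h)⁻¹ := inv_pos.mpr hpos
  have hcancel : (-h)⁻¹ * (-h) = 1 := inv_mul_cancel₀ (ne_of_gt hpos)
  -- v := (-h)⁻¹ • u is in K
  set v := (-h)⁻¹ • u with hv
  have hvK : v ∈ K := by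
    by_contra hvn
    obtain ⟨x, hxD, hxv⟩ := exists_dual_gt hK hx₀ hvn
    have h1 : ⟪x, v⟫ = (-h)⁻¹ * ⟪u, x⟫ := by
      rw [hv, real_inner_smul_right, real_inner_comm]
    have h2 : ⟪u, x⟫ ≤ h := hle x hxD
    nlinarith [h1 ▸ hxv]
  have h0K : (0 : Euc n) ∉ K := hK.2.2.2.1
  have huv : u = (-h) • v := by
    rw [hv, smul_smul, mul_inv_cancel₀ (ne_of_gt hpos), one_smul]
  have hu0 : u ≠ 0 := by
    intro h0
    have : ⟪u, x₀⟫ = 0 := by rw [h0]; exact inner_zero_left x₀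
    have : (0:ℝ) ≤ h := this ▸ hle x₀ hx₀
    linarith
  constructor
  · exact ⟨⟨-h, le_of_lt hpos, v, hvK, huv⟩, hu0⟩
  · -- sInf S = (-h)⁻¹
    set S := {l : ℝ | 0 ≤ l ∧ l • u ∈ K} with hS
    have hmem : (-h)⁻¹ ∈ S := ⟨le_of_lt hainv, hvK⟩
    have hlb : ∀ l ∈ S, (-h)⁻¹ ≤ l := by
      rintro l ⟨hl0, hlK⟩
      have hlne : l ≠ 0 := by
        intro h0; rw [h0, zero_smul] at hlK; exact h0K hlK
      have hlpos : 0 < l := lt_of_le_of_ne hl0 (Ne.symm hlne)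
      have key : ∀ x ∈ pcDual K, ⟪u, x⟫ ≤ -l⁻¹ := by
        intro x hx
        have := hx (l • u) hlK
        rw [real_inner_smul_right] at this
        rw [real_inner_comm] at this
        have hinv : l⁻¹ * l = 1 := inv_mul_cancel₀ hlne
        have hlinv : (0:ℝ) < l⁻¹ := inv_pos.mpr hlpos
        nlinarith
      have hsle : h ≤ -l⁻¹ := csSup_le ⟨⟪u, x₀⟫, x₀, hx₀, rfl⟩ (by
        rintro z ⟨x, hx, rfl⟩; exact key x hx)
      have h1 : l⁻¹ ≤ -h := by linarith
      have h2 : (0:ℝ) < l⁻¹ := inv_pos.mpr hlpos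
      calc (-h)⁻¹ ≤ (l⁻¹)⁻¹ := inv_anti₀ h2 h1
        _ = l := inv_inv l
    have hinf : sInf S = (-h)⁻¹ :=
      le_antisymm (csInf_le ⟨(-h)⁻¹, hlb⟩ hmem) (le_csInf ⟨_, hmem⟩ hlb)
    rw [hinf]
    rw [one_div]
    rw [← neg_inv]
    exact neg_neg _
end
end

section
/- Let PC^n be the set of closed pseudo-cones in ℝⁿ together with ∅ and ℝⁿ, partially ordered by inclusion. Then PC^n is a lattice, with K ∧ L = K ∩ L, and K ∨ L equal to the closure of the convex hull of K ∪ L if it does not contain the origin, and ℝⁿ otherwise. -/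
open Set MeasureTheory
open scoped Classical
open scoped RealInnerProductSpace

noncomputable section

open scoped Pointwise

lemma scale_closure_hull {n : ℕ} {S : Set (Euc n)}
    (hS : ∀ x ∈ S, ∀ l : ℝ, 1 ≤ l → l • x ∈ S) :
    ∀ x ∈ closure (convexHull ℝ S), ∀ l : ℝ, 1 ≤ l → l • x ∈ closure (convexHull ℝ S) := by
  intro x hx l hl
  have hl0 : (l : ℝ) ≠ 0 := by linarith
  have h1 : l • S ⊆ S := by
    rintro _ ⟨y, hy, rfl⟩; exact hS y hy l hl
  have h2 : l • closure (convexHull ℝ S) ⊆ closure (convexHull ℝ S) := by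
    rw [← closure_smul₀ l (convexHull ℝ S), ← convexHull_smul]
    exact closure_mono (convexHull_mono h1)
  exact h2 ⟨x, hx, rfl⟩

/-- `PC^n`, ordered by inclusion, is a lattice. -/
theorem pc_lattice {n : ℕ} (K L : Set (Euc n)) (hK : MemPC K) (hL : MemPC L) :
    (MemPC (K ∩ L) ∧ ∀ M, MemPC M → (M ⊆ K ∩ L ↔ M ⊆ K ∧ M ⊆ L)) ∧
    (MemPC (pcJoin K L) ∧ ∀ M, MemPC M → (pcJoin K L ⊆ M ↔ K ⊆ M ∧ L ⊆ M)) := by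
  have hCsub : ∀ M : Set (Euc n), MemPC M → K ⊆ M → L ⊆ M → pcJoin K L ⊆ M := by
    intro M hM hKM hLM
    have hUnion : K ∪ L ⊆ M := union_subset hKM hLM
    rcases hM with hM | hM | hM
    · have hC : closure (convexHull ℝ (K ∪ L)) ⊆ M := by
        have := convexHull_min hUnion hM.2.2.1
        exact hM.1.closure_subset_iff.mpr this
      have h0 : (0 : Euc n) ∉ closure (convexHull ℝ (K ∪ L)) :=
        fun h => hM.2.2.2.1 (hC h)
      rw [pcJoin, if_neg h0]; exact hC
    · subst hM
      have hKe : K = ∅ := subset_empty_iff.mp hKM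
      have hLe : L = ∅ := subset_empty_iff.mp hLM
      rw [pcJoin, hKe, hLe]
      simp
    · rw [hM]; exact subset_univ _
  have hKsub : K ⊆ pcJoin K L := by
    rw [pcJoin]
    split
    · exact subset_univ _
    · exact (subset_union_left.trans (subset_convexHull ℝ _)).trans subset_closure
  have hLsub : L ⊆ pcJoin K L := by
    rw [pcJoin]
    split
    · exact subset_univ _
    · exact (subset_union_right.trans (subset_convexHull ℝ _)).trans subset_closure
  refine ⟨⟨?_, fun M _ => subset_inter_iff⟩, ⟨?_, fun M hM =>
    ⟨fun h => ⟨hKsub.trans h, hLsub.trans h⟩, fun ⟨h1, h2⟩ => hCsub M hM h1 h2⟩⟩⟩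
  · -- meet is in PC
    rcases eq_empty_or_nonempty (K ∩ L) with he | hne
    · exact Or.inr (Or.inl he)
    rcases hK with hK | hK | hK
    · rcases hL with hL | hL | hL
      · refine Or.inl ⟨hK.1.inter hL.1, hne, hK.2.2.1.inter hL.2.2.1,
          fun h => hK.2.2.2.1 h.1, fun x hx l hl => ⟨hK.2.2.2.2 x hx.1 l hl, hL.2.2.2.2 x hx.2 l hl⟩⟩
      · subst hL; rw [inter_empty] at hne; exact absurd hne not_nonempty_empty
      · subst hL; rw [inter_univ]; exact Or.inl hK
    · subst hK; rw [empty_inter]; exact Or.inr (Or.inl rfl)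
    · subst hK; rw [univ_inter]; exact hL
  · -- join is in PC
    rcases hK with hK | hK | hK
    · rcases hL with hL | hL | hL
      · -- both pseudo-cones
        rw [pcJoin]
        split
        · exact Or.inr (Or.inr rfl)
        · rename_i h0
          refine Or.inl ⟨isClosed_closure, ?_, (convex_convexHull ℝ _).closure, h0, ?_⟩
          · obtain ⟨x, hx⟩ := hK.2.1
            exact ⟨x, subset_closure (subset_convexHull ℝ _ (Or.inl hx))⟩
          · refine scale_closure_hull ?_
            rintro x (hx | hx) l hl
            · exact Or.inl (hK.2.2.2.2 x hx l hl)
            · exact Or.inr (hL.2.2.2.2 x hx l hl)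
      · subst hL
        rw [pcJoin]
        have : K ∪ (∅ : Set (Euc n)) = K := union_empty K
        rw [this, hK.2.2.1.convexHull_eq  , hK.1.closure_eq]
        rw [if_neg hK.2.2.2.1]
        exact Or.inl hK
      · subst hL
        rw [pcJoin]
        have : K ∪ (univ : Set (Euc n)) = univ := union_univ K
        rw [this, convexHull_univ, closure_univ, if_pos (mem_univ _)]
        exact Or.inr (Or.inr rfl)
    · subst hK
      rw [pcJoin, empty_union]
      rcases hL with hL | hL | hL
      · rw [hL.2.2.1.convexHull_eq, hL.1.closure_eq, if_neg hL.2.2.2.1]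
        exact Or.inl hL
      · subst hL
        rw [convexHull_empty, closure_empty, if_neg (notMem_empty _)]
        exact Or.inr (Or.inl rfl)
      · subst hL; rw [convexHull_univ, closure_univ, if_pos (mem_univ _)]
        exact Or.inr (Or.inr rfl)
    · subst hK
      rw [pcJoin, univ_union, convexHull_univ, closure_univ, if_pos (mem_univ _)]
      exact Or.inr (Or.inr rfl)
end
end

section
/- For K, L in PC^n (extending * by ∅* = ℝⁿ and (ℝⁿ)* = ∅), the duality satisfies K* ∧ L* = (K ∨ L)* and K* ∨ L* = (K ∧ L)*. -/
open Set MeasureTheory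
open scoped Classical
open scoped RealInnerProductSpace

noncomputable section

section Aux

open scoped Pointwise

variable {n : ℕ}

lemma pcDual_mem_iff {S : Set (Euc n)} {x : Euc n} :
    x ∈ pcDual S ↔ ∀ y ∈ S, ⟪x, y⟫ ≤ (-1 : ℝ) := Iff.rfl

lemma pcDual_union (K L : Set (Euc n)) :
    pcDual (K ∪ L) = pcDual K ∩ pcDual L := by
  ext x
  simp only [pcDual, Set.mem_setOf_eq, Set.mem_union, Set.mem_inter_iff, or_imp, forall_and]

lemma pcDual_hullClosure (S : Set (Euc n)) :
    pcDual (closure (convexHull ℝ S)) = pcDual S := by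
  apply Set.Subset.antisymm
  · intro x hx y hy
    exact hx y (subset_closure (subset_convexHull ℝ S hy))
  · intro x hx
    have hC : Convex ℝ {y : Euc n | ⟪x, y⟫ ≤ (-1 : ℝ)} :=
      convex_halfSpace_le
        ⟨fun a b => inner_add_right x a b, fun c a => real_inner_smul_right x a c⟩ _
    have hCc : IsClosed {y : Euc n | ⟪x, y⟫ ≤ (-1 : ℝ)} :=
      isClosed_le (Continuous.inner continuous_const continuous_id) continuous_const
    intro y hy
    exact closure_minimal (convexHull_min hx hC) hCc hy

lemma pcDual_eq_empty_of_zero_mem {S : Set (Euc n)} (h : (0 : Euc n) ∈ S) :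
    pcDual S = ∅ := by
  ext x
  simp only [pcDual, Set.mem_setOf_eq, Set.mem_empty_iff_false, iff_false, not_forall]
  refine ⟨0, h, ?_⟩
  rw [inner_zero_right]; norm_num

lemma pcDual_empty : pcDual (∅ : Set (Euc n)) = Set.univ := by
  ext x; simp [pcDual]

lemma part1 (K L : Set (Euc n)) :
    pcDual K ∩ pcDual L = pcDual (pcJoin K L) := by
  rw [← pcDual_union, ← pcDual_hullClosure (K ∪ L), pcJoin]
  split_ifs with h
  · rw [pcDual_eq_empty_of_zero_mem h, pcDual_eq_empty_of_zero_mem (Set.mem_univ 0)]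
  · rfl

lemma isClosed_pcDual (S : Set (Euc n)) : IsClosed (pcDual S) := by
  have : pcDual S = ⋂ y ∈ S, {x : Euc n | ⟪x, y⟫ ≤ (-1 : ℝ)} := by
    ext x; simp [pcDual]
  rw [this]
  exact isClosed_biInter fun y _ =>
    isClosed_le (Continuous.inner continuous_id continuous_const) continuous_const

lemma convex_pcDual (S : Set (Euc n)) : Convex ℝ (pcDual S) := by
  intro x hx y hy a b ha hb hab z hz
  have h1 := hx z hz
  have h2 := hy z hz
  rw [inner_add_left, real_inner_smul_left, real_inner_smul_left]
  nlinarith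

lemma zero_notMem_pcDual {S : Set (Euc n)} (hS : S.Nonempty) :
    (0 : Euc n) ∉ pcDual S := by
  obtain ⟨y, hy⟩ := hS
  intro h
  have := h y hy
  rw [inner_zero_left] at this
  linarith

lemma smul_mem_pcDual {S : Set (Euc n)} {x : Euc n} (hx : x ∈ pcDual S)
    {l : ℝ} (hl : 1 ≤ l) : l • x ∈ pcDual S := by
  intro y hy
  have := hx y hy
  rw [real_inner_smul_left]
  nlinarith

lemma pcDual_nonempty_s13 {K : Set (Euc n)} (hK : IsClosedPseudoCone K) :
    (pcDual K).Nonempty := by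
  obtain ⟨hcl, _, hconv, h0, _⟩ := hK
  obtain ⟨f, u, hfa, hux⟩ := geometric_hahn_banach_closed_point hconv hcl h0
  have hu : u < 0 := by simpa using hux
  set v := (InnerProductSpace.toDual ℝ (Euc n)).symm f with hv
  have hvf : ∀ y, ⟪v, y⟫ = f y := fun y => InnerProductSpace.toDual_symm_apply
  refine ⟨(-u)⁻¹ • v, fun y hy => ?_⟩
  rw [real_inner_smul_left, hvf]
  rw [inv_mul_le_iff₀ (by linarith : (0:ℝ) < -u)]
  have := hfa y hy
  linarith

lemma pcBiDual {K : Set (Euc n)} (hK : IsClosedPseudoCone K) :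
    pcDual (pcDual K) = K := by
  obtain ⟨hcl, hne, hconv, h0, hsc⟩ := hK
  apply Set.Subset.antisymm
  · intro x hx
    by_contra hxK
    obtain ⟨f, u, hfa, hux⟩ := geometric_hahn_banach_closed_point hconv hcl hxK
    set v := (InnerProductSpace.toDual ℝ (Euc n)).symm f with hvdef
    have hvf : ∀ y, ⟪v, y⟫ = f y := fun y => InnerProductSpace.toDual_symm_apply
    rcases lt_or_ge u 0 with hu | hu
    · have hyK : (-u)⁻¹ • v ∈ pcDual K := by
        intro y hy
        rw [real_inner_smul_left, hvf]
        rw [inv_mul_le_iff₀ (by linarith : (0:ℝ) < -u)]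
        have := hfa y hy
        linarith
      have hle := hx _ hyK
      rw [real_inner_comm, real_inner_smul_left, hvf] at hle
      rw [inv_mul_le_iff₀ (by linarith : (0:ℝ) < -u)] at hle
      linarith
    · have hvle : ∀ a ∈ K, ⟪v, a⟫ ≤ 0 := by
        intro a ha
        by_contra hpos
        push_neg at hpos
        have hl : (1:ℝ) ≤ u / ⟪v, a⟫ + 1 := by
          have : 0 ≤ u / ⟪v, a⟫ := div_nonneg hu hpos.le
          linarith
        have hmem := hsc a ha _ hl
        have := hfa _ hmem
        rw [← hvf, real_inner_smul_right] at this
        rw [div_add' _ _ _ (ne_of_gt hpos), div_mul_eq_mul_div,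
          div_lt_iff₀ hpos] at this
        nlinarith
      obtain ⟨w, hw⟩ := pcDual_nonempty_s13 ⟨hcl, hne, hconv, h0, hsc⟩
      have hfx : 0 < ⟪v, x⟫ := by rw [hvf]; linarith
      set t := (|⟪w, x⟫| + 1) / ⟪v, x⟫ with ht
      have htpos : 0 < t := div_pos (by positivity) hfx
      have hyK : w + t • v ∈ pcDual K := by
        intro y hy
        rw [inner_add_left, real_inner_smul_left]
        have h1 := hw y hy
        have h2 := hvle y hy
        nlinarith
      have hle := hx _ hyK
      rw [real_inner_comm, inner_add_left, real_inner_smul_left] at hle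
      have htv : t * ⟪v, x⟫ = |⟪w, x⟫| + 1 := div_mul_cancel₀ _ (ne_of_gt hfx)
      have habs := neg_abs_le ⟪w, x⟫
      rw [htv] at hle
      linarith
  · intro x hxK y hy
    rw [real_inner_comm]
    exact hy x hxK

lemma smulClosed_closure_hull {S : Set (Euc n)}
    (hS : ∀ x ∈ S, ∀ l : ℝ, 1 ≤ l → l • x ∈ S) :
    ∀ x ∈ closure (convexHull ℝ S), ∀ l : ℝ, 1 ≤ l →
      l • x ∈ closure (convexHull ℝ S) := by
  intro x hx l hl
  have hsub : l • S ⊆ S := by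
    rintro _ ⟨y, hy, rfl⟩
    exact hS y hy l hl
  have hkey : l • closure (convexHull ℝ S) ⊆ closure (convexHull ℝ S) := by
    calc l • closure (convexHull ℝ S)
        ⊆ closure (l • convexHull ℝ S) := by
          rw [← Set.image_smul, ← Set.image_smul]
          exact image_closure_subset_closure_image (continuous_const_smul l)
      _ = closure (convexHull ℝ (l • S)) := by rw [convexHull_smul]
      _ ⊆ closure (convexHull ℝ S) := closure_mono (convexHull_mono hsub)
  exact hkey (Set.smul_mem_smul_set hx)

lemma pcJoin_comm (K L : Set (Euc n)) : pcJoin K L = pcJoin L K := by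
  unfold pcJoin
  rw [Set.union_comm]

lemma pcJoin_univ_left (L : Set (Euc n)) : pcJoin Set.univ L = Set.univ := by
  unfold pcJoin
  rw [Set.univ_union, convexHull_univ, closure_univ, if_pos (Set.mem_univ 0)]

lemma pcJoin_empty_left {S : Set (Euc n)} (h : IsClosed S) (hc : Convex ℝ S)
    (h0 : (0 : Euc n) ∉ S) : pcJoin ∅ S = S := by
  unfold pcJoin
  rw [Set.empty_union, hc.convexHull_eq, h.closure_eq, if_neg h0]

lemma part2 {K L : Set (Euc n)} (hK : MemPC K) (hL : MemPC L) :
    pcJoin (pcDual K) (pcDual L) = pcDual (K ∩ L) := by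
  rcases hK with hK | rfl | rfl
  · rcases hL with hL | rfl | rfl
    · -- main case: both closed pseudo-cones
      have h1 : K ∩ L = pcDual (pcJoin (pcDual K) (pcDual L)) := by
        rw [← part1, pcBiDual hK, pcBiDual hL]
      by_cases h0 : (0 : Euc n) ∈ closure (convexHull ℝ (pcDual K ∪ pcDual L))
      · have hJ : pcJoin (pcDual K) (pcDual L) = Set.univ := if_pos h0
        rw [hJ]
        rw [hJ, pcDual_eq_empty_of_zero_mem (Set.mem_univ 0)] at h1
        rw [h1, pcDual_empty]
      · have hJ : pcJoin (pcDual K) (pcDual L) =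
            closure (convexHull ℝ (pcDual K ∪ pcDual L)) := if_neg h0
        have hM : IsClosedPseudoCone (pcJoin (pcDual K) (pcDual L)) := by
          rw [hJ]
          obtain ⟨w, hw⟩ := pcDual_nonempty_s13 hK
          refine ⟨isClosed_closure,
            ⟨w, subset_closure (subset_convexHull ℝ _ (Or.inl hw))⟩,
            (convex_convexHull ℝ _).closure, h0, ?_⟩
          refine smulClosed_closure_hull ?_
          rintro x (hx | hx) l hl
          · exact Or.inl (smul_mem_pcDual hx hl)
          · exact Or.inr (smul_mem_pcDual hx hl)
        calc pcJoin (pcDual K) (pcDual L)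
            = pcDual (pcDual (pcJoin (pcDual K) (pcDual L))) := (pcBiDual hM).symm
          _ = pcDual (K ∩ L) := by rw [← h1]
    · -- L = ∅
      rw [Set.inter_empty, pcDual_empty, pcJoin_comm, pcJoin_univ_left]
    · -- L = univ
      rw [Set.inter_univ, pcDual_eq_empty_of_zero_mem (Set.mem_univ 0), pcJoin_comm,
        pcJoin_empty_left (isClosed_pcDual K) (convex_pcDual K)
          (zero_notMem_pcDual hK.2.1)]
  · -- K = ∅
    rw [Set.empty_inter, pcDual_empty, pcJoin_univ_left]
  · -- K = univ
    rw [Set.univ_inter, pcDual_eq_empty_of_zero_mem (Set.mem_univ 0)]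
    rcases hL with hL | rfl | rfl
    · exact pcJoin_empty_left (isClosed_pcDual L) (convex_pcDual L)
        (zero_notMem_pcDual hL.2.1)
    · rw [pcDual_empty, pcJoin_comm, pcJoin_univ_left]
    · rw [pcDual_eq_empty_of_zero_mem (Set.mem_univ 0),
        pcJoin_empty_left isClosed_empty convex_empty (Set.notMem_empty 0)]

end Aux

/-- The duality on `PC^n` interchanges meets and joins:
`K* ∧ L* = (K ∨ L)*` and `K* ∨ L* = (K ∧ L)*`. -/
theorem pcDual_lattice_duality {n : ℕ} (K L : Set (Euc n))
    (hK : MemPC K) (hL : MemPC L) :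
    pcDual K ∩ pcDual L = pcDual (pcJoin K L) ∧
      pcJoin (pcDual K) (pcDual L) = pcDual (K ∩ L) := by
  exact ⟨part1 K L, part2 hK hL⟩
end
end

section
/- Let m ≥ 1 and x₁, …, x_m ∈ ℝⁿ with o not in the convex hull of {x₁, …, x_m}. Then the join (in the lattice PC^n) of the pseudo-cones [1,∞)·x₁, …, [1,∞)·x_m equals [1,∞)·conv{x₁, …, x_m}; in particular, the set [1,∞)·conv{x₁, …, x_m} is closed. -/
open Set MeasureTheory
open scoped Classical
open scoped RealInnerProductSpace

noncomputable section

open scoped Pointwise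

/-!
For a convex set `Λ ⊆ (0, ∞)` of scalars, `Λ • C` is convex whenever `C` is, since a convex
combination of `a₁ y₁` and `a₂ y₂` is a multiple of a convex combination of `y₁` and `y₂`; hence
`conv (Λ • A) = Λ • conv A`. With `Λ = [1, ∞)` and `A = {x₁, …, x_m}`, the union of the rays `x̄ᵢ`
is `Λ • A`, so it remains to see that `Λ • conv A` is closed. This holds because `conv A` is
compact and avoids `o`: its points have norm at least some `δ > 0`, so near a given point only
scalars from a bounded, hence compact, part of `Λ` occur.
-/

section ConvexSmul

variable {𝕜 E : Type*} [Field 𝕜] [LinearOrder 𝕜] [IsStrictOrderedRing 𝕜] [AddCommGroup E]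
  [Module 𝕜 E] {s : Set 𝕜} {t : Set E}

theorem Convex.smul_of_forall_pos (hs : Convex 𝕜 s) (hs₀ : ∀ a ∈ s, 0 < a) (ht : Convex 𝕜 t) :
    Convex 𝕜 (s • t) := by
  rintro _ ⟨a₁, ha₁, y₁, hy₁, rfl⟩ _ ⟨a₂, ha₂, y₂, hy₂, rfl⟩ b₁ b₂ hb₁ hb₂ hb
  set a := b₁ * a₁ + b₂ * a₂
  have ha : 0 < a := hs₀ a (hs ha₁ ha₂ hb₁ hb₂ hb)
  refine ⟨a, hs ha₁ ha₂ hb₁ hb₂ hb, (b₁ * a₁ / a) • y₁ + (b₂ * a₂ / a) • y₂,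
    ht hy₁ hy₂ (by have := hs₀ a₁ ha₁; positivity) (by have := hs₀ a₂ ha₂; positivity)
      (by rw [← add_div]; exact div_self ha.ne'), ?_⟩
  simp only [smul_add, smul_smul, mul_div_cancel₀ _ ha.ne']

theorem convexHull_smul_of_forall_pos (hs : Convex 𝕜 s) (hs₀ : ∀ a ∈ s, 0 < a) (t : Set E) :
    convexHull 𝕜 (s • t) = s • convexHull 𝕜 t := by
  refine (convexHull_min (smul_subset_smul_left (subset_convexHull 𝕜 t))
    (hs.smul_of_forall_pos hs₀ (convex_convexHull 𝕜 t))).antisymm ?_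
  rintro _ ⟨a, ha, y, hy, rfl⟩
  have : a • y ∈ convexHull 𝕜 (a • t) := by
    rw [convexHull_smul]
    exact smul_mem_smul_set hy
  exact convexHull_mono (smul_set_subset_smul ha) this

end ConvexSmul

theorem IsClosed.smul_of_isCompact_of_zero_notMem {𝕜 E : Type*} [NormedField 𝕜] [ProperSpace 𝕜]
    [NormedAddCommGroup E] [NormedSpace 𝕜 E] {s : Set 𝕜} {t : Set E} (hs : IsClosed s)
    (ht : IsCompact t) (h0 : (0 : E) ∉ t) : IsClosed (s • t) := by
  obtain ⟨δ, hδ, hball⟩ := Metric.mem_nhds_iff.1 (ht.isClosed.isOpen_compl.mem_nhds h0)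
  have hnorm : ∀ y ∈ t, δ ≤ ‖y‖ := fun y hy ↦
    not_lt.1 fun h ↦ hball (mem_ball_zero_iff.2 h) hy
  refine isClosed_of_closure_subset fun z hz ↦ ?_
  set R := (‖z‖ + 1) / δ
  have hK : IsClosed ((s ∩ Metric.closedBall 0 R) • t) :=
    (((isCompact_closedBall 0 R).inter_left hs).smul_set ht).isClosed
  refine smul_subset_smul_right inter_subset_left (hK.closure_subset ?_)
  rw [Metric.mem_closure_iff] at hz ⊢
  intro ε hε
  obtain ⟨_, ⟨a, ha, y, hy, rfl⟩, hdist⟩ := hz (min ε 1) (lt_min hε one_pos)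
  refine ⟨a • y, smul_mem_smul ⟨ha, ?_⟩ hy, hdist.trans_le (min_le_left _ _)⟩
  rw [mem_closedBall_zero_iff, le_div_iff₀ hδ]
  calc ‖a‖ * δ ≤ ‖a‖ * ‖y‖ := by gcongr; exact hnorm y hy
    _ = ‖a • y‖ := (norm_smul a y).symm
    _ ≤ ‖z‖ + dist (a • y) z := by rw [dist_eq_norm]; exact norm_le_insert' _ _
    _ ≤ ‖z‖ + 1 := by linarith [dist_comm z (a • y), min_le_right ε 1]

theorem join_rays_eq_general {n m : ℕ} (x : Fin m → Euc n)
    (h0 : (0 : Euc n) ∉ convexHull ℝ (Set.range x)) :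
    closure (convexHull ℝ (⋃ i, {z | ∃ l : ℝ, 1 ≤ l ∧ z = l • x i}))
        = {z | ∃ l : ℝ, 1 ≤ l ∧ ∃ y ∈ convexHull ℝ (Set.range x), z = l • y} ∧
      IsClosed {z | ∃ l : ℝ, 1 ≤ l ∧ ∃ y ∈ convexHull ℝ (Set.range x), z = l • y} := by
  have hrays : (⋃ i, {z | ∃ l : ℝ, 1 ≤ l ∧ z = l • x i}) = Ici (1 : ℝ) • range x := by
    ext z; simp [mem_smul, eq_comm, exists_comm (α := Fin m)]
  have hcone : {z | ∃ l : ℝ, 1 ≤ l ∧ ∃ y ∈ convexHull ℝ (range x), z = l • y}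
      = Ici (1 : ℝ) • convexHull ℝ (range x) := by
    ext z; simp [mem_smul, eq_comm]
  have hclosed : IsClosed (Ici (1 : ℝ) • convexHull ℝ (range x)) :=
    isClosed_Ici.smul_of_isCompact_of_zero_notMem
      ((finite_range x).isCompact_convexHull (𝕜 := ℝ)) h0
  rw [hrays, hcone,
    convexHull_smul_of_forall_pos (convex_Ici (1 : ℝ)) (fun _ h ↦ one_pos.trans_le h),
    hclosed.closure_eq]
  exact ⟨rfl, hclosed⟩

/-- If `o ∉ conv{x₁,…,x_m}` then the join of the pseudo-cones `x̄ᵢ = [1,∞) xᵢ` equals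
`[1,∞) conv{x₁,…,x_m}`; in particular the latter set is closed. -/
theorem join_rays_eq {n m : ℕ} (hm : 1 ≤ m) (x : Fin m → Euc n)
    (h0 : (0 : Euc n) ∉ convexHull ℝ (Set.range x)) :
    closure (convexHull ℝ (⋃ i, {z | ∃ l : ℝ, 1 ≤ l ∧ z = l • x i}))
        = {z | ∃ l : ℝ, 1 ≤ l ∧ ∃ y ∈ convexHull ℝ (Set.range x), z = l • y} ∧
      IsClosed {z | ∃ l : ℝ, 1 ≤ l ∧ ∃ y ∈ convexHull ℝ (Set.range x), z = l • y} :=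
  join_rays_eq_general x h0
end
end
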